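/- arXiv:2208.00844 — 2 statements merged into one kernel-verified Lean document; each statement's English description precedes it below -/
import Mathlib

section
/- (Signature S-pair criterion, Theorem 1.) Let s be a module term and G ⊆ P^m a finite set of nonzero module elements with φ(g) ≠ 0 for every g ∈ G. Suppose that for every p ∈ P^m which is either a regular S-pair Spair(f,g) of two elements f, g ∈ G or one of the canonical basis vectors e₁,…,e_m, and which satisfies sig(p) ≺ s, every regular Sig-normal form of p with respect to G is a syzygy or is singularly Sig-top-reducible with respect to G. Then G is a Sig-Gröbner basis up to s. If the hypothesis holds for all such p with no restriction on sig(p), then G is a Sig-Gröbner basis. -/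
open MvPolynomial

/-- A term (power product) identified with its exponent vector in `ℕⁿ`;
the product of terms corresponds tord addition of exponent vectors. -/
abbrev Term (n : ℕ) := Fin n →₀ ℕ

/-- A module term `t·eᵢ` identified with the pair `(t, i)`. -/
abbrev MTerm (n m : ℕ) := (Fin n →₀ ℕ) × Fin m

/-- A monomial order on terms: a linear order with `1 ≤ t` for every term `t`,
compatible with term multiplication (= addition of exponent vectors). -/
structure TermOrder (n : ℕ) where
  le : Term n → Term n → Prop
  linear : IsLinearOrder (Term n) le
  bot : ∀ t : Term n, le 0 t
  add_le_add : ∀ u v w : Term n, le u v → le (w + u) (w + v)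

/-- A compatible order extension `⪯` of a monomial order tord module terms:
a linear order whose strict part is well-founded, satisfying
(i) `u ≤ v → u·eᵢ ⪯ v·eᵢ` and (ii) `t·eᵢ ⪯ t′·eⱼ → (u·t)·eᵢ ⪯ (u·t′)·eⱼ`. -/
structure ModOrder (n m : ℕ) (tord : TermOrder n) where
  le : MTerm n m → MTerm n m → Prop
  linear : IsLinearOrder (MTerm n m) le
  wf : WellFounded (fun a b : MTerm n m => le a b ∧ a ≠ b)
  compat : ∀ u v : Term n, tord.le u v → ∀ i : Fin m, le (u, i) (v, i)
  stable : ∀ (t t' : Term n) (i j : Fin m) (u : Term n),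
      le (t, i) (t', j) → le (u + t, i) (u + t', j)

variable {F : Type*} [Field F] {n m : ℕ}

/-- `IsLT tord f t` : `t` is the leading term of the polynomial `f` w.r.t. `tord`. -/
def IsLT (tord : TermOrder n) (f : MvPolynomial (Fin n) F) (t : Term n) : Prop :=
  t ∈ f.support ∧ ∀ u ∈ f.support, tord.le u t

/-- The module homomorphism `φ : P^m → P`, `(p₁,…,p_m) ↦ Σᵢ pᵢ·fᵢ`. -/
noncomputable def phi (fs : Fin m → MvPolynomial (Fin n) F)
    (f : Fin m → MvPolynomial (Fin n) F) : MvPolynomial (Fin n) F :=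
  ∑ i, f i * fs i

/-- The set of module terms occurring in a module element with nonzero coefficient. -/
def msupport (f : Fin m → MvPolynomial (Fin n) F) : Set (MTerm n m) :=
  {σ | MvPolynomial.coeff σ.1 (f σ.2) ≠ 0}

/-- `IsSig mo f σ` : `σ` is the signature of `f`, i.e. the `⪯`-largest module term of `f`. -/
def IsSig {tord : TermOrder n} (mo : ModOrder n m tord)
    (f : Fin m → MvPolynomial (Fin n) F) (σ : MTerm n m) : Prop :=
  σ ∈ msupport f ∧ ∀ τ ∈ msupport f, mo.le τ σ

/-- Multiplication of a module element by a term `u`. -/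
noncomputable def tmul (u : Term n) (f : Fin m → MvPolynomial (Fin n) F) :
    Fin m → MvPolynomial (Fin n) F :=
  fun i => MvPolynomial.monomial u (1 : F) * f i

/-- The strict part `≺` of `⪯`. -/
def mlt {tord : TermOrder n} (mo : ModOrder n m tord) (a b : MTerm n m) : Prop :=
  mo.le a b ∧ a ≠ b

/-- `σ ≺ s` where `s` is a module term or the formal symbol `∞ = ⊤`
(with `r ≺ ∞` for every module term `r`). -/
def ltE {tord : TermOrder n} (mo : ModOrder n m tord) (σ : MTerm n m)
    (s : WithTop (MTerm n m)) : Prop :=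
  ∀ τ : MTerm n m, s = ↑τ → mlt mo σ τ

/-- `σ ⪯ s` where `s` is a module term or the formal symbol `∞ = ⊤`. -/
def leE {tord : TermOrder n} (mo : ModOrder n m tord) (σ : MTerm n m)
    (s : WithTop (MTerm n m)) : Prop :=
  ∀ τ : MTerm n m, s = ↑τ → mo.le σ τ

/-- A term `t` is Sig-reducible w.r.t. `G` up tord `s` if there are `g ∈ G` and a term `u`
with `LT(φ(u·g)) = t` and `sig(u·g) ≺ s`. -/
def SigRedTerm (tord : TermOrder n) (mo : ModOrder n m tord)
    (fs : Fin m → MvPolynomial (Fin n) F)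
    (G : Finset (Fin m → MvPolynomial (Fin n) F))
    (s : WithTop (MTerm n m)) (t : Term n) : Prop :=
  ∃ g ∈ G, ∃ (u : Term n) (σ : MTerm n m),
    IsLT tord (phi fs (tmul u g)) t ∧ IsSig mo (tmul u g) σ ∧ ltE mo σ s

/-- `h` is Sig-tail-irreducible w.r.t. `G` up tord `s` : no term of `Tail(φ(h))`
is Sig-reducible w.r.t. `G` up tord `s`. -/
def SigTailIrred (tord : TermOrder n) (mo : ModOrder n m tord)
    (fs : Fin m → MvPolynomial (Fin n) F)
    (G : Finset (Fin m → MvPolynomial (Fin n) F))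
    (h : Fin m → MvPolynomial (Fin n) F) (s : WithTop (MTerm n m)) : Prop :=
  ∀ lt : Term n, IsLT tord (phi fs h) lt →
    ∀ t ∈ (phi fs h).support, t ≠ lt → ¬ SigRedTerm tord mo fs G s t

/-- A Sig-reduction step on `f` w.r.t. `G` at the term `t ∈ T(φ(f))`, producing `f'`. -/
def SigRedStepAt (tord : TermOrder n) (mo : ModOrder n m tord)
    (fs : Fin m → MvPolynomial (Fin n) F)
    (G : Finset (Fin m → MvPolynomial (Fin n) F))
    (t : Term n) (f f' : Fin m → MvPolynomial (Fin n) F) : Prop :=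
  ∃ g ∈ G, ∃ (u lg : Term n) (σf σug : MTerm n m),
    t ∈ (phi fs f).support ∧ IsLT tord (phi fs g) lg ∧ t = u + lg ∧
    IsSig mo f σf ∧ IsSig mo (tmul u g) σug ∧ mo.le σug σf ∧
    f' = f - (MvPolynomial.coeff t (phi fs f) / MvPolynomial.coeff lg (phi fs g)) • tmul u g

/-- A regular Sig-reduction step at `t` : additionally `sig(u·g) ≺ sig(f)`. -/
def RegSigRedStepAt (tord : TermOrder n) (mo : ModOrder n m tord)
    (fs : Fin m → MvPolynomial (Fin n) F)
    (G : Finset (Fin m → MvPolynomial (Fin n) F))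
    (t : Term n) (f f' : Fin m → MvPolynomial (Fin n) F) : Prop :=
  ∃ g ∈ G, ∃ (u lg : Term n) (σf σug : MTerm n m),
    t ∈ (phi fs f).support ∧ IsLT tord (phi fs g) lg ∧ t = u + lg ∧
    IsSig mo f σf ∧ IsSig mo (tmul u g) σug ∧ mlt mo σug σf ∧
    f' = f - (MvPolynomial.coeff t (phi fs f) / MvPolynomial.coeff lg (phi fs g)) • tmul u g

/-- A Sig-reduction step on `f` w.r.t. `G`. -/
def SigRedStep (tord : TermOrder n) (mo : ModOrder n m tord)
    (fs : Fin m → MvPolynomial (Fin n) F)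
    (G : Finset (Fin m → MvPolynomial (Fin n) F))
    (f f' : Fin m → MvPolynomial (Fin n) F) : Prop :=
  ∃ t : Term n, SigRedStepAt tord mo fs G t f f'

/-- A regular Sig-reduction step on `f` w.r.t. `G`. -/
def RegSigRedStep (tord : TermOrder n) (mo : ModOrder n m tord)
    (fs : Fin m → MvPolynomial (Fin n) F)
    (G : Finset (Fin m → MvPolynomial (Fin n) F))
    (f f' : Fin m → MvPolynomial (Fin n) F) : Prop :=
  ∃ t : Term n, RegSigRedStepAt tord mo fs G t f f'

/-- `f` Sig-reduces tord zero w.r.t. `G` : `f →_{G,∗} h` for some syzygy `h`. -/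
def SigReducesToZero (tord : TermOrder n) (mo : ModOrder n m tord)
    (fs : Fin m → MvPolynomial (Fin n) F)
    (G : Finset (Fin m → MvPolynomial (Fin n) F))
    (f : Fin m → MvPolynomial (Fin n) F) : Prop :=
  ∃ h, Relation.ReflTransGen (SigRedStep tord mo fs G) f h ∧ phi fs h = 0

/-- `G` is a Sig-Gröbner basis up tord the module term `s` :
every nonzero `f` with `sig(f) ≺ s` Sig-reduces tord zero w.r.t. `G`. -/
def SigGBUpTo (tord : TermOrder n) (mo : ModOrder n m tord)
    (fs : Fin m → MvPolynomial (Fin n) F)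
    (G : Finset (Fin m → MvPolynomial (Fin n) F)) (s : MTerm n m) : Prop :=
  ∀ f σ, f ≠ 0 → IsSig mo f σ → mlt mo σ s → SigReducesToZero tord mo fs G f

/-- `q` is a regular Sig-normal form of `p` w.r.t. `G`. -/
def RegNF (tord : TermOrder n) (mo : ModOrder n m tord)
    (fs : Fin m → MvPolynomial (Fin n) F)
    (G : Finset (Fin m → MvPolynomial (Fin n) F))
    (p q : Fin m → MvPolynomial (Fin n) F) : Prop :=
  Relation.ReflTransGen (RegSigRedStep tord mo fs G) p q ∧
    ∀ q', ¬ RegSigRedStep tord mo fs G q q'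

/-- `h` is singularly Sig-top-reducible w.r.t. `G` : a singular Sig-top-reduction step
applies tord `h`. -/
def SingTopReducible (tord : TermOrder n) (mo : ModOrder n m tord)
    (fs : Fin m → MvPolynomial (Fin n) F)
    (G : Finset (Fin m → MvPolynomial (Fin n) F))
    (h : Fin m → MvPolynomial (Fin n) F) : Prop :=
  ∃ t : Term n, IsLT tord (phi fs h) t ∧
    ∃ g ∈ G, ∃ (u lg : Term n) (σh σug : MTerm n m),
      IsLT tord (phi fs g) lg ∧ t = u + lg ∧
      IsSig mo h σh ∧ IsSig mo (tmul u g) σug ∧ σug = σh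

/-- The least common multiple of two terms: the pointwise maximum of exponent vectors. -/
noncomputable def lcmTerm (a b : Term n) : Term n := Finsupp.zipWith max (max_self 0) a b

/-- `p` is the S-pair of `f` and `g` and this S-pair is regular. -/
def IsRegSpair (tord : TermOrder n) (mo : ModOrder n m tord)
    (fs : Fin m → MvPolynomial (Fin n) F)
    (f g p : Fin m → MvPolynomial (Fin n) F) : Prop :=
  ∃ lf lg : Term n, IsLT tord (phi fs f) lf ∧ IsLT tord (phi fs g) lg ∧
    (∀ σ₁ σ₂ : MTerm n m, IsSig mo (tmul (lcmTerm lf lg - lf) f) σ₁ →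
      IsSig mo (tmul (lcmTerm lf lg - lg) g) σ₂ → σ₁ ≠ σ₂) ∧
    p = (MvPolynomial.coeff lf (phi fs f))⁻¹ • tmul (lcmTerm lf lg - lf) f
      - (MvPolynomial.coeff lg (phi fs g))⁻¹ • tmul (lcmTerm lf lg - lg) g

/-- `T_G(f)` : the set of terms of `f` that are reducible w.r.t. the set `G`
of nonzero polynomials. -/
def TRed (tord : TermOrder n) (G : Finset (MvPolynomial (Fin n) F))
    (f : MvPolynomial (Fin n) F) : Set (Term n) :=
  {t | t ∈ f.support ∧ ∃ g ∈ G, ∃ lg u : Term n, IsLT tord g lg ∧ t = u + lg}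

/-- An ordinary reduction step on a polynomial `p` w.r.t. the polynomials `φ(g)`, `g ∈ G`. -/
noncomputable def OrdRedStep (tord : TermOrder n)
    (fs : Fin m → MvPolynomial (Fin n) F)
    (G : Finset (Fin m → MvPolynomial (Fin n) F))
    (p p' : MvPolynomial (Fin n) F) : Prop :=
  ∃ g ∈ G, ∃ (u lg : Term n),
    IsLT tord (phi fs g) lg ∧ (u + lg) ∈ p.support ∧
    p' = p - (MvPolynomial.coeff (u + lg) p / MvPolynomial.coeff lg (phi fs g)) •
      (MvPolynomial.monomial u (1 : F) * phi fs g)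

/- ===================== auxiliary development ===================== -/

section Aux

variable {F : Type*} [Field F] {n m : ℕ} {tord : TermOrder n} {mo : ModOrder n m tord}

/-- strict part of a term order -/
def tlt (tord : TermOrder n) (a b : Term n) : Prop := tord.le a b ∧ a ≠ b

namespace TermOrder

lemma rfl' (tord : TermOrder n) (a : Term n) : tord.le a a := by
  haveI := tord.linear; exact refl_of tord.le a

lemma trans' (tord : TermOrder n) {a b c : Term n} (h : tord.le a b) (h' : tord.le b c) :
    tord.le a c := by
  haveI := tord.linear; exact _root_.trans_of tord.le h h'

lemma antisymm' (tord : TermOrder n) {a b : Term n} (h : tord.le a b) (h' : tord.le b a) :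
    a = b := by
  haveI := tord.linear; exact _root_.antisymm h h'

lemma total' (tord : TermOrder n) (a b : Term n) : tord.le a b ∨ tord.le b a := by
  haveI := tord.linear; exact total_of tord.le a b

lemma not_le_iff (tord : TermOrder n) {a b : Term n} : ¬ tord.le b a ↔ tlt tord a b := by
  constructor
  · intro h
    rcases tord.total' a b with h' | h'
    · exact ⟨h', fun he => h (he ▸ tord.rfl' a)⟩
    · exact absurd h' h
  · rintro ⟨h1, h2⟩ h
    exact h2 (tord.antisymm' h1 h)

lemma le_of_add_right (tord : TermOrder n) (a d : Term n) : tord.le a (a + d) := by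
  have := tord.add_le_add 0 d a (tord.bot d)
  simpa [add_comm] using this

end TermOrder

lemma tlt_of_lt_of_le {a b c : Term n} (h : tlt tord a b) (h' : tord.le b c) : tlt tord a c := by
  refine ⟨tord.trans' h.1 h', fun he => ?_⟩
  subst he
  exact h.2 (tord.antisymm' h.1 h')

lemma tlt_of_le_of_lt {a b c : Term n} (h : tord.le a b) (h' : tlt tord b c) : tlt tord a c := by
  refine ⟨tord.trans' h h'.1, fun he => ?_⟩
  subst he
  exact h'.2 (tord.antisymm' h'.1 h)

namespace ModOrder

variable (mo)

lemma rfl' (a : MTerm n m) : mo.le a a := by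
  haveI := mo.linear; exact refl_of mo.le a

lemma trans' {a b c : MTerm n m} (h : mo.le a b) (h' : mo.le b c) : mo.le a c := by
  haveI := mo.linear; exact _root_.trans_of mo.le h h'

lemma antisymm' {a b : MTerm n m} (h : mo.le a b) (h' : mo.le b a) : a = b := by
  haveI := mo.linear; exact _root_.antisymm h h'

lemma total' (a b : MTerm n m) : mo.le a b ∨ mo.le b a := by
  haveI := mo.linear; exact total_of mo.le a b

lemma not_le_iff {a b : MTerm n m} : ¬ mo.le b a ↔ mlt mo a b := by
  constructor
  · intro h
    rcases mo.total' a b with h' | h'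
    · exact ⟨h', fun he => h (he ▸ mo.rfl' a)⟩
    · exact absurd h' h
  · rintro ⟨h1, h2⟩ h
    exact h2 (mo.antisymm' h1 h)

end ModOrder

lemma mlt_of_lt_of_le {a b c : MTerm n m} (h : mlt mo a b) (h' : mo.le b c) : mlt mo a c := by
  refine ⟨mo.trans' h.1 h', fun he => ?_⟩
  subst he
  exact h.2 (mo.antisymm' h.1 h')

lemma mlt_of_le_of_lt {a b c : MTerm n m} (h : mo.le a b) (h' : mlt mo b c) : mlt mo a c := by
  refine ⟨mo.trans' h h'.1, fun he => ?_⟩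
  subst he
  exact h'.2 (mo.antisymm' h'.1 h)

lemma ltE_of_le_of_ltE {a b : MTerm n m} {s' : WithTop (MTerm n m)}
    (h : mo.le a b) (h' : ltE mo b s') : ltE mo a s' :=
  fun τ hτ => mlt_of_le_of_lt h (h' τ hτ)

/-- maximum of a nonempty finite set w.r.t. a total transitive relation -/
lemma exists_rel_max {α : Type*} {r : α → α → Prop}
    (htot : ∀ a b, r a b ∨ r b a) (htr : ∀ {a b c}, r a b → r b c → r a c)
    {s : Finset α} (hs : s.Nonempty) : ∃ a ∈ s, ∀ b ∈ s, r b a := by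
  classical
  induction s using Finset.induction_on with
  | empty => exact absurd hs (by simp)
  | @insert x t hx ih =>
    rcases t.eq_empty_or_nonempty with rfl | ht
    · refine ⟨x, by simp, ?_⟩
      intro b hb
      rcases Finset.mem_insert.1 hb with rfl | hb
      · rcases htot b b with h | h <;> exact h
      · simp at hb
    · obtain ⟨a, ha, hmax⟩ := ih ht
      rcases htot x a with h | h
      · refine ⟨a, Finset.mem_insert_of_mem ha, ?_⟩
        intro b hb
        rcases Finset.mem_insert.1 hb with rfl | hb
        · exact h
        · exact hmax b hb
      · refine ⟨x, Finset.mem_insert_self _ _, ?_⟩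
        intro b hb
        rcases Finset.mem_insert.1 hb with rfl | hb
        · rcases htot b b with h' | h' <;> exact h'
        · exact htr (hmax b hb) h

/-- Dickson: the strict part of a term order is well-founded. -/
lemma tlt_wf (tord : TermOrder n) : WellFounded (tlt tord) := by
  haveI : IsIrrefl (Term n) (tlt tord) := ⟨fun a h => h.2 rfl⟩
  haveI : IsTrans (Term n) (tlt tord) := ⟨fun a b c h h' => tlt_of_lt_of_le h h'.1⟩
  haveI : IsStrictOrder (Term n) (tlt tord) := { }
  rw [RelEmbedding.wellFounded_iff_isEmpty]
  constructor
  intro f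
  obtain ⟨i, j, hij, hle⟩ :=
    (wellQuasiOrdered_le (α := Term n)) (fun k => f k)
  have h1 : tord.le (f i) (f j) := by
    have : f i + (f j - f i) = f j := add_tsub_cancel_of_le hle
    have h2 := tord.le_of_add_right (f i) (f j - f i)
    rwa [this] at h2
  have h3 : tlt tord (f j) (f i) := f.map_rel_iff.2 hij
  exact h3.2 (tord.antisymm' h3.1 h1)

end Aux
section Aux2

variable {F : Type*} [Field F] {n m : ℕ} {tord : TermOrder n} {mo : ModOrder n m tord}
variable {fs : Fin m → MvPolynomial (Fin n) F}

lemma phi_sub (fs : Fin m → MvPolynomial (Fin n) F) (a b : Fin m → MvPolynomial (Fin n) F) :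
    phi fs (a - b) = phi fs a - phi fs b := by
  simp [phi, Pi.sub_apply, sub_mul, Finset.sum_sub_distrib]

lemma phi_smul (fs : Fin m → MvPolynomial (Fin n) F) (c : F)
    (a : Fin m → MvPolynomial (Fin n) F) : phi fs (c • a) = c • phi fs a := by
  simp [phi, Pi.smul_apply, smul_mul_assoc, Finset.smul_sum]

lemma phi_tmul (fs : Fin m → MvPolynomial (Fin n) F) (u : Term n)
    (g : Fin m → MvPolynomial (Fin n) F) :
    phi fs (tmul u g) = MvPolynomial.monomial u (1 : F) * phi fs g := by
  simp [phi, tmul, mul_assoc, Finset.mul_sum]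

lemma coeff_monomul (u v : Term n) (p : MvPolynomial (Fin n) F) :
    MvPolynomial.coeff (u + v) (MvPolynomial.monomial u (1 : F) * p) =
      MvPolynomial.coeff v p := by
  simpa using MvPolynomial.coeff_monomial_mul v u (1 : F) p

lemma mem_support_monomul {u t : Term n} {p : MvPolynomial (Fin n) F} :
    t ∈ (MvPolynomial.monomial u (1 : F) * p).support ↔ ∃ v ∈ p.support, t = u + v := by
  constructor
  · intro h
    rw [MvPolynomial.mem_support_iff, MvPolynomial.coeff_monomial_mul'] at h
    by_cases hle : u ≤ t
    · rw [if_pos hle] at h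
      refine ⟨t - u, ?_, (add_tsub_cancel_of_le hle).symm⟩
      rw [MvPolynomial.mem_support_iff]
      intro h0; rw [h0] at h; simp at h
    · rw [if_neg hle] at h; simp at h
  · rintro ⟨v, hv, rfl⟩
    rw [MvPolynomial.mem_support_iff, coeff_monomul]
    exact MvPolynomial.mem_support_iff.1 hv

lemma isLT_unique {p : MvPolynomial (Fin n) F} {t t' : Term n}
    (h : IsLT tord p t) (h' : IsLT tord p t') : t = t' :=
  tord.antisymm' (h'.2 t h.1) (h.2 t' h'.1)

lemma exists_isLT {p : MvPolynomial (Fin n) F} (hp : p ≠ 0) : ∃ t, IsLT tord p t := by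
  obtain ⟨t, ht, hmax⟩ := exists_rel_max tord.total' (fun h h' => tord.trans' h h')
    (MvPolynomial.support_nonempty.2 hp)
  exact ⟨t, ht, hmax⟩

lemma isLT_monomul {p : MvPolynomial (Fin n) F} {t : Term n} (u : Term n)
    (h : IsLT tord p t) : IsLT tord (MvPolynomial.monomial u (1 : F) * p) (u + t) := by
  constructor
  · exact mem_support_monomul.2 ⟨t, h.1, rfl⟩
  · intro v hv
    obtain ⟨w, hw, rfl⟩ := mem_support_monomul.1 hv
    exact tord.add_le_add w t u (h.2 w hw)

lemma coeff_ne_zero_of_isLT {p : MvPolynomial (Fin n) F} {t : Term n} (h : IsLT tord p t) :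
    MvPolynomial.coeff t p ≠ 0 := MvPolynomial.mem_support_iff.1 h.1

lemma mem_msupport {f : Fin m → MvPolynomial (Fin n) F} {σ : MTerm n m} :
    σ ∈ msupport f ↔ MvPolynomial.coeff σ.1 (f σ.2) ≠ 0 := Iff.rfl

/-- msupport is computed by a finset -/
lemma mem_msupport_iff {f : Fin m → MvPolynomial (Fin n) F} {σ : MTerm n m} :
    σ ∈ msupport f ↔ σ ∈ (Finset.univ.biUnion
      (fun i : Fin m => (f i).support.image (fun t => ((t, i) : MTerm n m)))) := by
  simp only [Finset.mem_biUnion, Finset.mem_univ, true_and, Finset.mem_image]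
  constructor
  · intro h
    exact ⟨σ.2, σ.1, MvPolynomial.mem_support_iff.2 h, rfl⟩
  · rintro ⟨i, t, ht, rfl⟩
    exact MvPolynomial.mem_support_iff.1 ht

lemma exists_isSig {f : Fin m → MvPolynomial (Fin n) F} (hf : f ≠ 0) :
    ∃ σ, IsSig mo f σ := by
  have hne : ∃ i, f i ≠ 0 := by
    by_contra h
    push_neg at h
    exact hf (funext h)
  obtain ⟨i, hi⟩ := hne
  obtain ⟨t, ht⟩ := (MvPolynomial.support_nonempty.2 hi)
  have hnonempty : (Finset.univ.biUnion
      (fun i : Fin m => (f i).support.image (fun t => ((t, i) : MTerm n m)))).Nonempty := by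
    exact ⟨(t, i), mem_msupport_iff.1 (MvPolynomial.mem_support_iff.1 ht)⟩
  obtain ⟨σ, hσ, hmax⟩ := exists_rel_max mo.total' (fun h h' => mo.trans' h h') hnonempty
  exact ⟨σ, mem_msupport_iff.2 hσ, fun τ hτ => hmax τ (mem_msupport_iff.1 hτ)⟩

lemma isSig_unique {f : Fin m → MvPolynomial (Fin n) F} {σ σ' : MTerm n m}
    (h : IsSig mo f σ) (h' : IsSig mo f σ') : σ = σ' :=
  mo.antisymm' (h'.2 σ h.1) (h.2 σ' h'.1)

lemma isSig_ne_zero {f : Fin m → MvPolynomial (Fin n) F} {σ : MTerm n m}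
    (h : IsSig mo f σ) : f ≠ 0 := by
  intro h0
  have := h.1
  rw [h0] at this
  simp [msupport] at this

lemma mem_msupport_tmul {u : Term n} {g : Fin m → MvPolynomial (Fin n) F} {σ : MTerm n m} :
    σ ∈ msupport (tmul u g) ↔ ∃ τ ∈ msupport g, σ = (u + τ.1, τ.2) := by
  constructor
  · intro h
    have h' : σ.1 ∈ (MvPolynomial.monomial u (1 : F) * g σ.2).support :=
      MvPolynomial.mem_support_iff.2 h
    obtain ⟨v, hv, hv'⟩ := mem_support_monomul.1 h'
    exact ⟨(v, σ.2), MvPolynomial.mem_support_iff.1 hv, Prod.ext hv' rfl⟩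
  · rintro ⟨τ, hτ, rfl⟩
    show MvPolynomial.coeff (u + τ.1) (MvPolynomial.monomial u (1:F) * g τ.2) ≠ 0
    rw [coeff_monomul]
    exact hτ

lemma isSig_tmul {g : Fin m → MvPolynomial (Fin n) F} {σ : MTerm n m} (u : Term n)
    (h : IsSig mo g σ) : IsSig mo (tmul u g) (u + σ.1, σ.2) := by
  constructor
  · exact mem_msupport_tmul.2 ⟨σ, h.1, rfl⟩
  · intro τ hτ
    obtain ⟨ρ, hρ, rfl⟩ := mem_msupport_tmul.1 hτ
    exact mo.stable ρ.1 σ.1 ρ.2 σ.2 u (h.2 ρ hρ)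

lemma tmul_tmul (u v : Term n) (g : Fin m → MvPolynomial (Fin n) F) :
    tmul u (tmul v g) = tmul (u + v) g := by
  funext i
  simp [tmul, ← mul_assoc, MvPolynomial.monomial_mul]

lemma mcoeff_sub_smul (a b : F) (x y : Fin m → MvPolynomial (Fin n) F) (σ : MTerm n m) :
    MvPolynomial.coeff σ.1 ((a • x - b • y) σ.2) =
      a * MvPolynomial.coeff σ.1 (x σ.2) - b * MvPolynomial.coeff σ.1 (y σ.2) := by
  simp [Pi.sub_apply, Pi.smul_apply, MvPolynomial.coeff_sub, MvPolynomial.coeff_smul]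

lemma msupport_sub_smul {a b : F} {x y : Fin m → MvPolynomial (Fin n) F} {σ : MTerm n m}
    (h : σ ∈ msupport (a • x - b • y)) : σ ∈ msupport x ∨ σ ∈ msupport y := by
  by_contra hc
  push_neg at hc
  have h1 : MvPolynomial.coeff σ.1 (x σ.2) = 0 := by
    by_contra h'; exact hc.1 h'
  have h2 : MvPolynomial.coeff σ.1 (y σ.2) = 0 := by
    by_contra h'; exact hc.2 h'
  have := mcoeff_sub_smul a b x y σ
  rw [h1, h2] at this
  simp at this
  exact h this

end Aux2
section Aux3

variable {F : Type*} [Field F] {n m : ℕ} {tord : TermOrder n} {mo : ModOrder n m tord}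
variable {fs : Fin m → MvPolynomial (Fin n) F} {G : Finset (Fin m → MvPolynomial (Fin n) F)}

lemma phi_zero (fs : Fin m → MvPolynomial (Fin n) F) :
    phi fs (0 : Fin m → MvPolynomial (Fin n) F) = 0 := by
  simp [phi]

lemma ne_zero_of_phi_ne {f : Fin m → MvPolynomial (Fin n) F} (h : phi fs f ≠ 0) : f ≠ 0 := by
  intro h0; rw [h0, phi_zero] at h; exact h rfl

lemma stepAt_props {t : Term n} {f f' : Fin m → MvPolynomial (Fin n) F}
    (h : SigRedStepAt tord mo fs G t f f') :
    t ∈ (phi fs f).support ∧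
    MvPolynomial.coeff t (phi fs f') = 0 ∧
    (∀ v, MvPolynomial.coeff v (phi fs f') ≠ MvPolynomial.coeff v (phi fs f) → tord.le v t) ∧
    (∀ σ0, IsSig mo f σ0 → ∀ τ ∈ msupport f', mo.le τ σ0) := by
  obtain ⟨g, hg, u, lg, σf, σug, ht, hlg, htu, hσf, hσug, hle, hf'⟩ := h
  set c := MvPolynomial.coeff t (phi fs f) / MvPolynomial.coeff lg (phi fs g) with hc
  have hphi : phi fs f' = phi fs f - c • (MvPolynomial.monomial u (1:F) * phi fs g) := by
    rw [hf', phi_sub, phi_smul, phi_tmul]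
  have hcoeff : ∀ v, MvPolynomial.coeff v (phi fs f') =
      MvPolynomial.coeff v (phi fs f)
        - c * MvPolynomial.coeff v (MvPolynomial.monomial u (1:F) * phi fs g) := by
    intro v; rw [hphi, MvPolynomial.coeff_sub, MvPolynomial.coeff_smul, smul_eq_mul]
  refine ⟨ht, ?_, ?_, ?_⟩
  · rw [hcoeff t, htu, coeff_monomul, hc,
      div_mul_cancel₀ _ (coeff_ne_zero_of_isLT hlg)]
    rw [← htu, sub_self]
  · intro v hv
    rw [hcoeff v] at hv
    have hne : MvPolynomial.coeff v (MvPolynomial.monomial u (1:F) * phi fs g) ≠ 0 := by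
      intro h0; rw [h0] at hv; simp at hv
    obtain ⟨w, hw, rfl⟩ := mem_support_monomul.1 (MvPolynomial.mem_support_iff.2 hne)
    rw [htu]
    exact tord.add_le_add w lg u (hlg.2 w hw)
  · intro σ0 hσ0 τ hτ
    have hσfeq : σf = σ0 := isSig_unique hσf hσ0
    have : f' = (1:F) • f - c • tmul u g := by rw [hf', one_smul]
    rw [this] at hτ
    rcases msupport_sub_smul hτ with h1 | h1
    · exact hσ0.2 τ h1
    · exact mo.trans' (hσug.2 τ h1) (hσfeq ▸ hle)

lemma regStepAt_toStep {t : Term n} {f f' : Fin m → MvPolynomial (Fin n) F}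
    (h : RegSigRedStepAt tord mo fs G t f f') : SigRedStepAt tord mo fs G t f f' := by
  obtain ⟨g, hg, u, lg, σf, σug, ht, hlg, htu, hσf, hσug, hle, hf'⟩ := h
  exact ⟨g, hg, u, lg, σf, σug, ht, hlg, htu, hσf, hσug, hle.1, hf'⟩

lemma regStep_toStep {f f' : Fin m → MvPolynomial (Fin n) F}
    (h : RegSigRedStep tord mo fs G f f') : SigRedStep tord mo fs G f f' := by
  obtain ⟨t, h⟩ := h; exact ⟨t, regStepAt_toStep h⟩

lemma regStepAt_sig {t : Term n} {f f' : Fin m → MvPolynomial (Fin n) F}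
    (h : RegSigRedStepAt tord mo fs G t f f') {σ0 : MTerm n m} (hσ0 : IsSig mo f σ0) :
    IsSig mo f' σ0 := by
  obtain ⟨g, hg, u, lg, σf, σug, ht, hlg, htu, hσf, hσug, hlt, hf'⟩ := h
  have hσfeq : σf = σ0 := isSig_unique hσf hσ0
  subst hσfeq
  set c := MvPolynomial.coeff t (phi fs f) / MvPolynomial.coeff lg (phi fs g) with hc
  constructor
  · show MvPolynomial.coeff σf.1 (f' σf.2) ≠ 0
    have hz : MvPolynomial.coeff σf.1 ((tmul u g) σf.2) = 0 := by
      by_contra h0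
      have : σf ∈ msupport (tmul u g) := h0
      have := hσug.2 σf this
      exact hlt.2 (mo.antisymm' hlt.1 this)
    have : f' = (1:F) • f - c • tmul u g := by rw [hf', one_smul]
    rw [this]
    have := mcoeff_sub_smul 1 c f (tmul u g) σf
    rw [hz] at this
    rw [this]
    simpa using (mem_msupport.1 hσf.1)
  · intro τ hτ
    exact (stepAt_props ⟨g, hg, u, lg, σf, σug, ht, hlg, htu, hσf, hσug, hlt.1, hf'⟩).2.2.2
      σf hσf τ hτ

/-- auxiliary order on polynomials, decreasing along any Sig-reduction step -/
def Rpoly (tord : TermOrder n) (p' p : MvPolynomial (Fin n) F) : Prop :=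
  ∃ t, MvPolynomial.coeff t p' = 0 ∧ MvPolynomial.coeff t p ≠ 0 ∧
    ∀ v, tlt tord t v → MvPolynomial.coeff v p' = MvPolynomial.coeff v p

/-- support indicator function -/
noncomputable def chi (p : MvPolynomial (Fin n) F) : Term n →₀ ℕ :=
  p.support.sum (fun t => Finsupp.single t 1)

lemma chi_apply (p : MvPolynomial (Fin n) F) (v : Term n) :
    chi p v = (if v ∈ p.support then 1 else 0) := by
  classical
  rw [chi, Finsupp.finset_sum_apply]
  rw [Finset.sum_congr rfl (fun t _ => Finsupp.single_apply)]
  exact Finset.sum_ite_eq' p.support v (fun _ => 1)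

lemma chi_apply_zero {p : MvPolynomial (Fin n) F} {v : Term n}
    (h : MvPolynomial.coeff v p = 0) : chi p v = 0 := by
  classical
  rw [chi_apply, if_neg]
  simpa [MvPolynomial.mem_support_iff] using h

lemma chi_apply_one {p : MvPolynomial (Fin n) F} {v : Term n}
    (h : MvPolynomial.coeff v p ≠ 0) : chi p v = 1 := by
  classical
  rw [chi_apply, if_pos]
  simpa [MvPolynomial.mem_support_iff] using h

lemma chi_eq_of_coeff_eq {p' p : MvPolynomial (Fin n) F} {v : Term n}
    (h : MvPolynomial.coeff v p' = MvPolynomial.coeff v p) : chi p' v = chi p v := by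
  by_cases h0 : MvPolynomial.coeff v p = 0
  · rw [chi_apply_zero h0, chi_apply_zero (h.trans h0)]
  · rw [chi_apply_one h0, chi_apply_one (by rw [h]; exact h0)]

lemma Rpoly_wf (tord : TermOrder n) : WellFounded (Rpoly (F := F) tord) := by
  classical
  haveI : IsTrichotomous (Term n) (fun a b => tlt tord b a) := by
    constructor
    intro a b hba hab
    by_contra h
    rcases tord.total' a b with h' | h'
    · exact hab ⟨h', h⟩
    · exact hba ⟨h', fun he => h he.symm⟩
  have hlex : WellFounded (Finsupp.Lex (fun a b : Term n => tlt tord b a)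
      ((· < ·) : ℕ → ℕ → Prop)) := by
    refine Finsupp.Lex.wellFounded' (fun k hk => Nat.not_lt_zero k hk) wellFounded_lt ?_
    exact tlt_wf tord
  refine Subrelation.wf ?_ (InvImage.wf chi hlex)
  rintro p' p ⟨t, h1, h2, h3⟩
  refine ⟨t, fun d hd => chi_eq_of_coeff_eq (h3 d hd), ?_⟩
  show chi p' t < chi p t
  rw [chi_apply_zero h1, chi_apply_one h2]
  exact Nat.zero_lt_one

lemma step_Rpoly {f f' : Fin m → MvPolynomial (Fin n) F}
    (h : SigRedStep tord mo fs G f f') : Rpoly tord (phi fs f') (phi fs f) := by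
  obtain ⟨t, hAt⟩ := h
  obtain ⟨ht, h0, hch, _⟩ := stepAt_props hAt
  refine ⟨t, h0, MvPolynomial.mem_support_iff.1 ht, ?_⟩
  intro v hv
  by_contra hne
  have := hch v hne
  exact hv.2 (tord.antisymm' hv.1 this)

lemma steps_wf : WellFounded (fun f' f : Fin m → MvPolynomial (Fin n) F =>
    SigRedStep tord mo fs G f f') :=
  Subrelation.wf (fun h => step_Rpoly h) (InvImage.wf (phi fs) (Rpoly_wf tord))

lemma regsteps_wf : WellFounded (fun f' f : Fin m → MvPolynomial (Fin n) F =>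
    RegSigRedStep tord mo fs G f f') :=
  Subrelation.wf (fun h => regStep_toStep h) steps_wf

lemma exists_regNF (p : Fin m → MvPolynomial (Fin n) F) :
    ∃ q, RegNF tord mo fs G p q := by
  induction p using (regsteps_wf (tord := tord) (mo := mo) (fs := fs) (G := G)).induction with
  | _ p IH =>
    by_cases h : ∃ p', RegSigRedStep tord mo fs G p p'
    · obtain ⟨p', hp'⟩ := h
      obtain ⟨q, hq1, hq2⟩ := IH p' hp'
      exact ⟨q, Relation.ReflTransGen.head hp' hq1, hq2⟩
    · push_neg at h
      exact ⟨p, Relation.ReflTransGen.refl, h⟩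

lemma regchain_sig {p q : Fin m → MvPolynomial (Fin n) F}
    (h : Relation.ReflTransGen (RegSigRedStep tord mo fs G) p q)
    {σ : MTerm n m} (hσ : IsSig mo p σ) : IsSig mo q σ := by
  induction h with
  | refl => exact hσ
  | tail _ hstep ih =>
    obtain ⟨t, hAt⟩ := hstep
    exact regStepAt_sig hAt ih

lemma chain_supp_bound {p q : Fin m → MvPolynomial (Fin n) F}
    (h : Relation.ReflTransGen (SigRedStep tord mo fs G) p q) :
    ∀ v ∈ (phi fs q).support, ∃ w ∈ (phi fs p).support, tord.le v w := by
  induction h with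
  | refl => exact fun v hv => ⟨v, hv, tord.rfl' v⟩
  | tail _ hstep ih =>
    rename_i b c _
    intro v hv
    obtain ⟨t, hAt⟩ := hstep
    obtain ⟨ht, h0, hch, _⟩ := stepAt_props hAt
    by_cases hcase : MvPolynomial.coeff v (phi fs c) = MvPolynomial.coeff v (phi fs b)
    · have : v ∈ (phi fs b).support := by
        rw [MvPolynomial.mem_support_iff] at hv ⊢
        rwa [← hcase]
      exact ih v this
    · have hvt : tord.le v t := hch v hcase
      obtain ⟨w, hw, hlew⟩ := ih t ht
      exact ⟨w, hw, tord.trans' hvt hlew⟩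

/-- If `x` Sig-reduces to zero then `LT(φ(x))` is Sig-top-reducible with signature `⪯ sig x`. -/
lemma LB {x z : Fin m → MvPolynomial (Fin n) F}
    (h : Relation.ReflTransGen (SigRedStep tord mo fs G) x z) (hz : phi fs z = 0) :
    ∀ L, IsLT tord (phi fs x) L → ∀ σx, IsSig mo x σx →
    ∃ g ∈ G, ∃ v lg σ, IsLT tord (phi fs g) lg ∧ L = v + lg ∧
      IsSig mo (tmul v g) σ ∧ mo.le σ σx := by
  induction h using Relation.ReflTransGen.head_induction_on with
  | refl =>
    intro L hL σx _
    exact absurd (coeff_ne_zero_of_isLT hL) (by simp [hz])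
  | head hstep hchain ih =>
    rename_i x c
    intro L hL σx hσx
    obtain ⟨t, hAt⟩ := hstep
    obtain ⟨g, hg, u, lg, σf, σug, ht, hlg, htu, hσf, hσug, hle, hf'⟩ := hAt
    by_cases hteq : t = L
    · subst hteq
      exact ⟨g, hg, u, lg, σug, hlg, htu, hσug,
        (isSig_unique hσf hσx) ▸ hle⟩
    · obtain ⟨ht', h0, hch, hbound⟩ :=
        stepAt_props ⟨g, hg, u, lg, σf, σug, ht, hlg, htu, hσf, hσug, hle, hf'⟩
      have htL : tlt tord t L := ⟨hL.2 t ht', hteq⟩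
      have hcoeffL : MvPolynomial.coeff L (phi fs c) = MvPolynomial.coeff L (phi fs x) := by
        by_contra hne
        have := hch L hne
        exact htL.2 (tord.antisymm' htL.1 this)
      have hφc : phi fs c ≠ 0 := by
        intro hzero
        have := coeff_ne_zero_of_isLT hL
        rw [← hcoeffL, hzero] at this
        simp at this
      have hLc : IsLT tord (phi fs c) L := by
        constructor
        · rw [MvPolynomial.mem_support_iff, hcoeffL]
          exact coeff_ne_zero_of_isLT hL
        · intro v hv
          by_cases hcase : MvPolynomial.coeff v (phi fs c) = MvPolynomial.coeff v (phi fs x)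
          · refine hL.2 v ?_
            rw [MvPolynomial.mem_support_iff] at hv ⊢
            rwa [← hcase]
          · exact tord.trans' (hch v hcase) htL.1
      obtain ⟨σc, hσc⟩ := exists_isSig (mo := mo) (ne_zero_of_phi_ne hφc)
      have hσcle : mo.le σc σx := hbound σx hσx σc hσc.1
      obtain ⟨g', hg', v, lg', σ', h1, h2, h3, h4⟩ := ih L hLc σc hσc
      exact ⟨g', hg', v, lg', σ', h1, h2, h3, mo.trans' h4 hσcle⟩

end Aux3
section Aux4

variable {F : Type*} [Field F] {n m : ℕ} {tord : TermOrder n} {mo : ModOrder n m tord}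
variable {fs : Fin m → MvPolynomial (Fin n) F} {G : Finset (Fin m → MvPolynomial (Fin n) F)}

/-- If `f` is Sig-irreducible then its leading term admits no reducer of signature `⪯ sig f`. -/
lemma topcon {f : Fin m → MvPolynomial (Fin n) F} {T : MTerm n m}
    (hirr : ∀ f₁, ¬ SigRedStep tord mo fs G f f₁) (hσf : IsSig mo f T)
    {Lf : Term n} (hLf : IsLT tord (phi fs f) Lf) {g : Fin m → MvPolynomial (Fin n) F}
    (hg : g ∈ G) {v lg : Term n} {σ : MTerm n m}
    (h1 : IsLT tord (phi fs g) lg) (h2 : Lf = v + lg) (h3 : IsSig mo (tmul v g) σ)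
    (h4 : mo.le σ T) : False :=
  hirr _ ⟨Lf, g, hg, v, lg, T, σ, hLf.1, h1, h2, hσf, h3, h4, rfl⟩

/-- cancelling the signature coefficient strictly lowers the signature -/
lemma cancel_sig {f y rr : Fin m → MvPolynomial (Fin n) F} {T : MTerm n m}
    (hσf : IsSig mo f T) (hy : IsSig mo y T)
    (hrr : rr = f - (MvPolynomial.coeff T.1 (f T.2) / MvPolynomial.coeff T.1 (y T.2)) • y)
    {σr : MTerm n m} (hσr : IsSig mo rr σr) : mlt mo σr T := by
  set c := MvPolynomial.coeff T.1 (f T.2) / MvPolynomial.coeff T.1 (y T.2) with hc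
  have hrr1 : rr = (1:F) • f - c • y := by rw [hrr, one_smul]
  have hle : mo.le σr T := by
    rcases msupport_sub_smul (hrr1 ▸ hσr.1) with h | h
    · exact hσf.2 σr h
    · exact hy.2 σr h
  refine ⟨hle, fun he => ?_⟩
  have h0 : MvPolynomial.coeff T.1 (rr T.2) = 0 := by
    rw [hrr1, mcoeff_sub_smul, hc, div_mul_cancel₀ _ hy.1]
    simp
  have := hσr.1
  rw [he] at this
  exact this h0

/-- An element with the same leading term as `f` but strictly smaller signature
yields a contradiction with irreducibility of `f`. -/
lemma H3lem {f : Fin m → MvPolynomial (Fin n) F} {T : MTerm n m}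
    (OIH : ∀ σ', mlt mo σ' T → ∀ y, y ≠ 0 → IsSig mo y σ' → SigReducesToZero tord mo fs G y)
    (hirr : ∀ f₁, ¬ SigRedStep tord mo fs G f f₁) (hσf : IsSig mo f T)
    {Lf : Term n} (hLf : IsLT tord (phi fs f) Lf)
    {y : Fin m → MvPolynomial (Fin n) F} {σy : MTerm n m}
    (hφy : phi fs y ≠ 0) (hσy : IsSig mo y σy) (hlt : mlt mo σy T)
    (hyL : IsLT tord (phi fs y) Lf) : False := by
  obtain ⟨z, hchain, hz⟩ := OIH σy hlt y (ne_zero_of_phi_ne hφy) hσy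
  obtain ⟨g, hg, v, lg, σ, h1, h2, h3, h4⟩ := LB hchain hz Lf hyL σy hσy
  exact topcon hirr hσf hLf hg h1 h2 h3 (mo.trans' h4 hlt.1)

/-- A syzygy with signature `T = sig f` yields a contradiction. -/
lemma H1lem {f : Fin m → MvPolynomial (Fin n) F} {T : MTerm n m}
    (OIH : ∀ σ', mlt mo σ' T → ∀ y, y ≠ 0 → IsSig mo y σ' → SigReducesToZero tord mo fs G y)
    (hirr : ∀ f₁, ¬ SigRedStep tord mo fs G f f₁) (hσf : IsSig mo f T)
    (hφf : phi fs f ≠ 0) {Lf : Term n} (hLf : IsLT tord (phi fs f) Lf)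
    {z : Fin m → MvPolynomial (Fin n) F}
    (hφz : phi fs z = 0) (hσz : IsSig mo z T) : False := by
  set c := MvPolynomial.coeff T.1 (f T.2) / MvPolynomial.coeff T.1 (z T.2) with hc
  set r := f - c • z with hr
  have hφr : phi fs r = phi fs f := by
    rw [hr, phi_sub, phi_smul, hφz, smul_zero, sub_zero]
  have hφrne : phi fs r ≠ 0 := by rw [hφr]; exact hφf
  obtain ⟨σr, hσr⟩ := exists_isSig (mo := mo) (ne_zero_of_phi_ne hφrne)
  have hlt : mlt mo σr T := cancel_sig hσf hσz hr hσr
  have hrL : IsLT tord (phi fs r) Lf := by rw [hφr]; exact hLf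
  exact H3lem OIH hirr hσf hLf hφrne hσr hlt hrL

end Aux4
section Aux5

variable {F : Type*} [Field F] {n m : ℕ} {tord : TermOrder n} {mo : ModOrder n m tord}
variable {fs : Fin m → MvPolynomial (Fin n) F} {G : Finset (Fin m → MvPolynomial (Fin n) F)}

lemma finsupp_add_right_cancel {a b c : Term n} (h : a + c = b + c) : a = b := by
  ext x
  have := DFunLike.congr_fun h x
  simp only [Finsupp.add_apply] at this
  omega

lemma finsupp_add_left_cancel {a b c : Term n} (h : a + b = a + c) : b = c := by
  ext x
  have := DFunLike.congr_fun h x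
  simp only [Finsupp.add_apply] at this
  omega

/-- The hypothesis tested on S-pairs and basis vectors. -/
def Cond (tord : TermOrder n) (mo : ModOrder n m tord)
    (fs : Fin m → MvPolynomial (Fin n) F) (G : Finset (Fin m → MvPolynomial (Fin n) F))
    (p : Fin m → MvPolynomial (Fin n) F) : Prop :=
  (∃ f ∈ G, ∃ g ∈ G, IsRegSpair tord mo fs f g p) ∨
    ∃ i : Fin m, p = Pi.single i (1 : MvPolynomial (Fin n) F)

/-- **Key claim**: a Sig-irreducible non-syzygy with signature `≺ s'` cannot exist
(given the criterion and reducibility-to-zero below `T`). -/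
lemma keyclaim (hG0 : ∀ g ∈ G, g ≠ 0) {s' : WithTop (MTerm n m)}
    (hyp' : ∀ p σp, Cond tord mo fs G p → IsSig mo p σp → ltE mo σp s' →
      ∀ q, RegNF tord mo fs G p q → phi fs q = 0 ∨ SingTopReducible tord mo fs G q)
    {T : MTerm n m}
    (OIH : ∀ σ', mlt mo σ' T → ∀ y, y ≠ 0 → IsSig mo y σ' → SigReducesToZero tord mo fs G y)
    {f : Fin m → MvPolynomial (Fin n) F}
    (hσf : IsSig mo f T) (hφf : phi fs f ≠ 0) (hT : ltE mo T s')
    (hirr : ∀ f₁, ¬ SigRedStep tord mo fs G f f₁) : False := by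
  classical
  obtain ⟨Lf, hLf⟩ := exists_isLT hφf
  -- Step A : the basis vector e_i, i = T.2
  have hesig : IsSig mo (Pi.single T.2 (1 : MvPolynomial (Fin n) F)) ((0 : Term n), T.2) := by
    constructor
    · rw [mem_msupport]
      rw [Pi.single_eq_same]
      simp [MvPolynomial.coeff_one]
    · intro τ hτ
      rw [mem_msupport] at hτ
      by_cases hτ2 : τ.2 = T.2
      · rw [hτ2, Pi.single_eq_same, MvPolynomial.coeff_one] at hτ
        split_ifs at hτ with h0
        · have hτeq : τ = ((0 : Term n), T.2) := Prod.ext h0.symm hτ2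
          rw [hτeq]
          exact mo.rfl' _
        · exact absurd rfl hτ
      · rw [Pi.single_eq_of_ne hτ2] at hτ
        simp at hτ
  have hlee : mo.le ((0 : Term n), T.2) T := by
    have h := mo.compat 0 T.1 (tord.bot T.1) T.2
    rwa [Prod.mk.eta] at h
  obtain ⟨q₁, hq₁c, hq₁i⟩ := exists_regNF (tord := tord) (mo := mo) (fs := fs) (G := G)
    (Pi.single T.2 (1 : MvPolynomial (Fin n) F))
  have hq₁sig : IsSig mo q₁ ((0 : Term n), T.2) := regchain_sig hq₁c hesig
  rcases hyp' _ _ (Or.inr ⟨T.2, rfl⟩) hesig (ltE_of_le_of_ltE hlee hT) q₁ ⟨hq₁c, hq₁i⟩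
    with hq10 | hq1s
  · -- e_i reduces to a syzygy : scale it up to signature T and contradict
    have hz : phi fs (tmul T.1 q₁) = 0 := by rw [phi_tmul, hq10, mul_zero]
    have hsigz : IsSig mo (tmul T.1 q₁) T := by
      have h := isSig_tmul T.1 hq₁sig
      rwa [add_zero, Prod.mk.eta] at h
    exact H1lem OIH hirr hσf hφf hLf hz hsigz
  · -- singular top reducer of the normal form of e_i : gives an element of W
    obtain ⟨t', hLTq₁, g₁, hg₁, w₁, lg₁, σh, σug, hlg₁, ht', hσh, hσug, hequσ⟩ := hq1s
    have hσugval : σug = ((0 : Term n), T.2) := hequσ.trans (isSig_unique hσh hq₁sig)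
    have hWwit : IsSig mo (tmul (T.1 + w₁) g₁) T := by
      have h := isSig_tmul T.1 (hσugval ▸ hσug)
      rw [tmul_tmul] at h
      rwa [add_zero, Prod.mk.eta] at h
    -- Step B : minimal top term over monomial multiples with signature T
    set Wset : Set (Term n) := { M | ∃ g ∈ G, ∃ u lg, IsLT tord (phi fs g) lg ∧
      IsSig mo (tmul u g) T ∧ M = u + lg } with hWset
    have hWne : Wset.Nonempty := ⟨(T.1 + w₁) + lg₁, g₁, hg₁, T.1 + w₁, lg₁, hlg₁, hWwit, rfl⟩
    set M := WellFounded.min (tlt_wf tord) Wset hWne with hM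
    obtain ⟨g₀, hg₀, u₀, lg₀, hlg₀, hsig₀, hMeq⟩ := WellFounded.min_mem (tlt_wf tord) Wset hWne
    rw [← hM] at hMeq
    have hLTp : IsLT tord (phi fs (tmul u₀ g₀)) M := by
      rw [phi_tmul, hMeq]
      exact isLT_monomul u₀ hlg₀
    -- Step C : is the minimal element regularly top-reducible?
    by_cases hred : ∃ g₂ ∈ G, ∃ v lg₂ σ₂, IsLT tord (phi fs g₂) lg₂ ∧ M = v + lg₂ ∧
        IsSig mo (tmul v g₂) σ₂ ∧ mlt mo σ₂ T
    · -- S-pair descent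
      obtain ⟨g₂, hg₂, v, lg₂, σ₂', hlg₂, hMv, hσ₂', hσ₂'T⟩ := hred
      set ℓ := lcmTerm lg₀ lg₂ with hℓ
      have hℓapp : ∀ x, ℓ x = max (lg₀ x) (lg₂ x) := by
        intro x; rw [hℓ, lcmTerm, Finsupp.zipWith_apply]
      have hl0 : lg₀ ≤ ℓ := Finsupp.le_def.2 fun x => by rw [hℓapp]; exact le_max_left _ _
      have hl2 : lg₂ ≤ ℓ := Finsupp.le_def.2 fun x => by rw [hℓapp]; exact le_max_right _ _
      have hlM : ℓ ≤ M := by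
        refine Finsupp.le_def.2 fun x => ?_
        rw [hℓapp]
        refine max_le ?_ ?_
        · have := DFunLike.congr_fun hMeq x
          simp only [Finsupp.add_apply] at this
          omega
        · have := DFunLike.congr_fun hMv x
          simp only [Finsupp.add_apply] at this
          omega
      set a₀ := ℓ - lg₀ with ha₀def
      set a₂ := ℓ - lg₂ with ha₂def
      set d := M - ℓ with hddef
      have ha₀ : a₀ + lg₀ = ℓ := tsub_add_cancel_of_le hl0
      have ha₂ : a₂ + lg₂ = ℓ := tsub_add_cancel_of_le hl2
      have hdl : d + ℓ = M := tsub_add_cancel_of_le hlM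
      have hu₀ : u₀ = d + a₀ := by
        refine finsupp_add_right_cancel (c := lg₀) ?_
        rw [← hMeq, add_assoc, ha₀, hdl]
      have hvd : v = d + a₂ := by
        refine finsupp_add_right_cancel (c := lg₂) ?_
        rw [← hMv, add_assoc, ha₂, hdl]
      obtain ⟨σg₀, hσg₀⟩ := exists_isSig (mo := mo) (hG0 g₀ hg₀)
      obtain ⟨σg₂, hσg₂⟩ := exists_isSig (mo := mo) (hG0 g₂ hg₂)
      have hσa₀ : IsSig mo (tmul a₀ g₀) (a₀ + σg₀.1, σg₀.2) := isSig_tmul a₀ hσg₀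
      have hσa₂ : IsSig mo (tmul a₂ g₂) (a₂ + σg₂.1, σg₂.2) := isSig_tmul a₂ hσg₂
      have hTd : T = (d + (a₀ + σg₀.1), σg₀.2) := by
        refine isSig_unique hsig₀ ?_
        have h := isSig_tmul d hσa₀
        rwa [tmul_tmul, ← hu₀] at h
      have hσ₂d : σ₂' = (d + (a₂ + σg₂.1), σg₂.2) := by
        refine isSig_unique hσ₂' ?_
        have h := isSig_tmul d hσa₂
        rwa [tmul_tmul, ← hvd] at h
      have hstrict : mlt mo ((a₂ + σg₂.1, σg₂.2) : MTerm n m) (a₀ + σg₀.1, σg₀.2) := by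
        rcases Classical.em (mo.le ((a₀ + σg₀.1, σg₀.2) : MTerm n m) (a₂ + σg₂.1, σg₂.2))
          with hle02 | hle02
        · exfalso
          have hst := mo.stable _ _ _ _ d hle02
          rw [← hTd] at hst
          rw [← hσ₂d] at hst
          exact hσ₂'T.2 (mo.antisymm' hσ₂'T.1 hst)
        · exact mo.not_le_iff.1 hle02
      set c₀ := MvPolynomial.coeff lg₀ (phi fs g₀) with hc₀
      set c₂ := MvPolynomial.coeff lg₂ (phi fs g₂) with hc₂
      have hc₀ne : c₀ ≠ 0 := coeff_ne_zero_of_isLT hlg₀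
      have hc₂ne : c₂ ≠ 0 := coeff_ne_zero_of_isLT hlg₂
      set P := c₀⁻¹ • tmul a₀ g₀ - c₂⁻¹ • tmul a₂ g₂ with hP
      have hRS : IsRegSpair tord mo fs g₀ g₂ P := by
        refine ⟨lg₀, lg₂, hlg₀, hlg₂, ?_, ?_⟩
        · intro σ₁x σ₂x h1 h2
          rw [isSig_unique h1 hσa₀, isSig_unique h2 hσa₂]
          exact fun he => hstrict.2 he.symm
        · rw [hP]
      have hPsig : IsSig mo P ((a₀ + σg₀.1, σg₀.2) : MTerm n m) := by
        constructor
        · show MvPolynomial.coeff _ (P _) ≠ 0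
          rw [hP, mcoeff_sub_smul]
          have hz2 : MvPolynomial.coeff (a₀ + σg₀.1)
              ((tmul a₂ g₂) σg₀.2) = 0 := by
            by_contra h0
            have hmem : ((a₀ + σg₀.1, σg₀.2) : MTerm n m) ∈ msupport (tmul a₂ g₂) := h0
            have := hσa₂.2 _ hmem
            exact hstrict.2 (mo.antisymm' hstrict.1 this)
          rw [hz2, mul_zero, sub_zero]
          exact mul_ne_zero (inv_ne_zero hc₀ne) hσa₀.1
        · intro τ hτ
          rw [hP] at hτ
          rcases msupport_sub_smul hτ with h | h
          · exact hσa₀.2 τ h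
          · exact mo.trans' (hσa₂.2 τ h) hstrict.1
      have hσa₀T : mo.le ((a₀ + σg₀.1, σg₀.2) : MTerm n m) T := by
        rw [hTd]
        refine mo.compat _ _ ?_ _
        have h := tord.le_of_add_right (a₀ + σg₀.1) d
        rwa [add_comm (a₀ + σg₀.1) d] at h
      have hPltE : ltE mo ((a₀ + σg₀.1, σg₀.2) : MTerm n m) s' := ltE_of_le_of_ltE hσa₀T hT
      by_cases hφP : phi fs P = 0
      · -- the S-pair itself is a syzygy
        have hz : phi fs (tmul d P) = 0 := by rw [phi_tmul, hφP, mul_zero]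
        have hsigz : IsSig mo (tmul d P) T := by
          have h := isSig_tmul d hPsig
          rwa [← hTd] at h
        exact H1lem OIH hirr hσf hφf hLf hz hsigz
      · -- the terms of φ(P) all lie strictly below ℓ
        have hφPeq : phi fs P = c₀⁻¹ • (MvPolynomial.monomial a₀ (1:F) * phi fs g₀)
            - c₂⁻¹ • (MvPolynomial.monomial a₂ (1:F) * phi fs g₂) := by
          rw [hP, phi_sub, phi_smul, phi_smul, phi_tmul, phi_tmul]
        have hcoeffP : ∀ x, MvPolynomial.coeff x (phi fs P) =
            c₀⁻¹ * MvPolynomial.coeff x (MvPolynomial.monomial a₀ (1:F) * phi fs g₀)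
            - c₂⁻¹ * MvPolynomial.coeff x (MvPolynomial.monomial a₂ (1:F) * phi fs g₂) := by
          intro x
          rw [hφPeq, MvPolynomial.coeff_sub, MvPolynomial.coeff_smul,
            MvPolynomial.coeff_smul, smul_eq_mul, smul_eq_mul]
        have hPl : MvPolynomial.coeff ℓ (phi fs P) = 0 := by
          rw [hcoeffP, ← ha₀, coeff_monomul, ha₀, ← ha₂, coeff_monomul, ← hc₀, ← hc₂,
            inv_mul_cancel₀ hc₀ne, inv_mul_cancel₀ hc₂ne, sub_self]
        have hPtop : ∀ t'' ∈ (phi fs P).support, tlt tord t'' ℓ := by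
          intro t'' ht''
          have hne : MvPolynomial.coeff t'' (phi fs P) ≠ 0 :=
            MvPolynomial.mem_support_iff.1 ht''
          have hle'' : tord.le t'' ℓ := by
            rw [hcoeffP] at hne
            by_cases h1 : MvPolynomial.coeff t''
                (MvPolynomial.monomial a₀ (1:F) * phi fs g₀) = 0
            · by_cases h2 : MvPolynomial.coeff t''
                  (MvPolynomial.monomial a₂ (1:F) * phi fs g₂) = 0
              · rw [h1, h2] at hne; simp at hne
              · have := (isLT_monomul a₂ hlg₂).2 t'' (MvPolynomial.mem_support_iff.2 h2)
                rwa [ha₂] at this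
            · have := (isLT_monomul a₀ hlg₀).2 t'' (MvPolynomial.mem_support_iff.2 h1)
              rwa [ha₀] at this
          exact ⟨hle'', fun he => hne (he ▸ hPl)⟩
        -- take a regular normal form of the S-pair and use the hypothesis
        obtain ⟨q, hqc, hqi⟩ := exists_regNF (tord := tord) (mo := mo) (fs := fs) (G := G) P
        have hqsig : IsSig mo q ((a₀ + σg₀.1, σg₀.2) : MTerm n m) := regchain_sig hqc hPsig
        rcases hyp' P _ (Or.inl ⟨g₀, hg₀, g₂, hg₂, hRS⟩) hPsig hPltE q ⟨hqc, hqi⟩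
          with hq0 | hqs
        · -- normal form is a syzygy : scale up and contradict
          have hz : phi fs (tmul d q) = 0 := by rw [phi_tmul, hq0, mul_zero]
          have hsigz : IsSig mo (tmul d q) T := by
            have h := isSig_tmul d hqsig
            rwa [← hTd] at h
          exact H1lem OIH hirr hσf hφf hLf hz hsigz
        · -- singular top reducer of q : produces an element of W below M
          obtain ⟨t'', hLTq, g₄, hg₄, w, lg₄, σh', σug', hlg₄, ht'', hσh', hσug', hequ'⟩ := hqs
          have hσugval' : σug' = ((a₀ + σg₀.1, σg₀.2) : MTerm n m) :=
            hequ'.trans (isSig_unique hσh' hqsig)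
          have hnewsig : IsSig mo (tmul (d + w) g₄) T := by
            have h := isSig_tmul d (hσugval' ▸ hσug')
            rw [tmul_tmul] at h
            rwa [← hTd] at h
          have hmemW : ((d + w) + lg₄) ∈ Wset :=
            ⟨g₄, hg₄, d + w, lg₄, hlg₄, hnewsig, rfl⟩
          have ht''ℓ : tlt tord t'' ℓ := by
            obtain ⟨w', hw', hlew'⟩ := chain_supp_bound
              (Relation.ReflTransGen.mono (fun a b h => regStep_toStep h) _ _ hqc) t'' hLTq.1
            exact tlt_of_le_of_lt hlew' (hPtop w' hw')
          have hfin : tlt tord ((d + w) + lg₄) M := by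
            have heq2 : (d + w) + lg₄ = d + t'' := by rw [ht'', add_assoc]
            rw [heq2, ← hdl]
            exact ⟨tord.add_le_add t'' ℓ d ht''ℓ.1,
              fun he => ht''ℓ.2 (finsupp_add_left_cancel he)⟩
          rw [hM] at hfin
          exact WellFounded.not_lt_min (tlt_wf tord) Wset hmemW hfin
    · -- minimal element is regularly top-irreducible : compare with f
      push_neg at hred
      by_cases hLfM : Lf = M
      · exact topcon hirr hσf hLf hg₀ hlg₀ (hLfM.trans hMeq) hsig₀ (mo.rfl' T)
      · set r := f - (MvPolynomial.coeff T.1 (f T.2) /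
          MvPolynomial.coeff T.1 ((tmul u₀ g₀) T.2)) • tmul u₀ g₀ with hr
        have hccne : MvPolynomial.coeff T.1 (f T.2) /
            MvPolynomial.coeff T.1 ((tmul u₀ g₀) T.2) ≠ 0 :=
          div_ne_zero hσf.1 hsig₀.1
        have hcoeffr : ∀ x, MvPolynomial.coeff x (phi fs r) =
            MvPolynomial.coeff x (phi fs f) -
            (MvPolynomial.coeff T.1 (f T.2) / MvPolynomial.coeff T.1 ((tmul u₀ g₀) T.2)) *
              MvPolynomial.coeff x (phi fs (tmul u₀ g₀)) := by
          intro x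
          rw [hr, phi_sub, phi_smul, MvPolynomial.coeff_sub, MvPolynomial.coeff_smul,
            smul_eq_mul]
        have hboundr : ∀ x, x ∈ (phi fs r).support →
            tord.le x Lf ∨ tord.le x M := by
          intro x hx
          have hne := MvPolynomial.mem_support_iff.1 hx
          rw [hcoeffr] at hne
          by_cases h1 : MvPolynomial.coeff x (phi fs f) = 0
          · by_cases h2 : MvPolynomial.coeff x (phi fs (tmul u₀ g₀)) = 0
            · rw [h1, h2] at hne; simp at hne
            · exact Or.inr (hLTp.2 x (MvPolynomial.mem_support_iff.2 h2))
          · exact Or.inl (hLf.2 x (MvPolynomial.mem_support_iff.2 h1))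
        rcases tord.total' Lf M with h1 | h1
        · -- Lf ≺ M : the difference has top term M, giving a regular reducer of M
          have hltLM : tlt tord Lf M := ⟨h1, hLfM⟩
          have hfM0 : MvPolynomial.coeff M (phi fs f) = 0 := by
            by_contra h0
            have := hLf.2 M (MvPolynomial.mem_support_iff.2 h0)
            exact hltLM.2 (tord.antisymm' h1 this)
          have hrM : MvPolynomial.coeff M (phi fs r) ≠ 0 := by
            rw [hcoeffr, hfM0, zero_sub, neg_ne_zero]
            exact mul_ne_zero hccne (coeff_ne_zero_of_isLT hLTp)
          have hφrne : phi fs r ≠ 0 := fun h0 => hrM (by rw [h0]; simp)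
          have hrLT : IsLT tord (phi fs r) M := by
            refine ⟨MvPolynomial.mem_support_iff.2 hrM, ?_⟩
            intro x hx
            rcases hboundr x hx with h | h
            · exact tord.trans' h h1
            · exact h
          obtain ⟨σr, hσr⟩ := exists_isSig (mo := mo) (ne_zero_of_phi_ne hφrne)
          have hltσr : mlt mo σr T := cancel_sig hσf hsig₀ hr hσr
          obtain ⟨z, hchain, hz0⟩ := OIH σr hltσr r (ne_zero_of_phi_ne hφrne) hσr
          obtain ⟨g₂, hg₂, v, lg₂, σ, hh1, hh2, hh3, hh4⟩ := LB hchain hz0 M hrLT σr hσr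
          exact hred g₂ hg₂ v lg₂ σ hh1 hh2 hh3 (mlt_of_le_of_lt hh4 hltσr)
        · -- M ≺ Lf : the difference has top term Lf, contradicting irreducibility of f
          have hltML : tlt tord M Lf := ⟨h1, fun he => hLfM he.symm⟩
          have hpLf0 : MvPolynomial.coeff Lf (phi fs (tmul u₀ g₀)) = 0 := by
            by_contra h0
            have := hLTp.2 Lf (MvPolynomial.mem_support_iff.2 h0)
            exact hltML.2 (tord.antisymm' h1 this)
          have hrLf : MvPolynomial.coeff Lf (phi fs r) ≠ 0 := by
            rw [hcoeffr, hpLf0, mul_zero, sub_zero]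
            exact coeff_ne_zero_of_isLT hLf
          have hφrne : phi fs r ≠ 0 := fun h0 => hrLf (by rw [h0]; simp)
          have hrLT : IsLT tord (phi fs r) Lf := by
            refine ⟨MvPolynomial.mem_support_iff.2 hrLf, ?_⟩
            intro x hx
            rcases hboundr x hx with h | h
            · exact h
            · exact tord.trans' h h1
          obtain ⟨σr, hσr⟩ := exists_isSig (mo := mo) (ne_zero_of_phi_ne hφrne)
          have hltσr : mlt mo σr T := cancel_sig hσf hsig₀ hr hσr
          exact H3lem OIH hirr hσf hLf hφrne hσr hltσr hrLT

end Aux5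
section Aux6

variable {F : Type*} [Field F] {n m : ℕ} {tord : TermOrder n} {mo : ModOrder n m tord}
variable {fs : Fin m → MvPolynomial (Fin n) F} {G : Finset (Fin m → MvPolynomial (Fin n) F)}

lemma mainlemma (hG0 : ∀ g ∈ G, g ≠ 0) {s' : WithTop (MTerm n m)}
    (hyp' : ∀ p σp, Cond tord mo fs G p → IsSig mo p σp → ltE mo σp s' →
      ∀ q, RegNF tord mo fs G p q → phi fs q = 0 ∨ SingTopReducible tord mo fs G q) :
    ∀ T (f : Fin m → MvPolynomial (Fin n) F), f ≠ 0 → IsSig mo f T → ltE mo T s' →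
      SigReducesToZero tord mo fs G f := by
  intro T
  refine mo.wf.induction
    (C := fun T => ∀ f : Fin m → MvPolynomial (Fin n) F, f ≠ 0 → IsSig mo f T →
      ltE mo T s' → SigReducesToZero tord mo fs G f) T ?_
  clear T
  intro T OIH f
  refine (steps_wf (tord := tord) (mo := mo) (fs := fs) (G := G)).induction
    (C := fun f => f ≠ 0 → IsSig mo f T → ltE mo T s' → SigReducesToZero tord mo fs G f)
    f ?_
  clear f
  intro f IIH hf hσf hT
  by_cases hφ : phi fs f = 0
  · exact ⟨f, Relation.ReflTransGen.refl, hφ⟩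
  by_cases hstep : ∃ f₁, SigRedStep tord mo fs G f f₁
  · obtain ⟨f₁, h₁⟩ := hstep
    by_cases hφ₁ : phi fs f₁ = 0
    · exact ⟨f₁, Relation.ReflTransGen.single h₁, hφ₁⟩
    · have hf₁ : f₁ ≠ 0 := ne_zero_of_phi_ne hφ₁
      obtain ⟨σ₁, hσ₁⟩ := exists_isSig (mo := mo) hf₁
      have hle₁ : mo.le σ₁ T := by
        obtain ⟨t, hAt⟩ := h₁
        exact (stepAt_props hAt).2.2.2 T hσf σ₁ hσ₁.1
      by_cases heq : σ₁ = T
      · obtain ⟨z, hchain, hz⟩ := IIH f₁ h₁ hf₁ (heq ▸ hσ₁) hT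
        exact ⟨z, Relation.ReflTransGen.head h₁ hchain, hz⟩
      · have hmlt : mlt mo σ₁ T := ⟨hle₁, heq⟩
        obtain ⟨z, hchain, hz⟩ := OIH σ₁ hmlt f₁ hf₁ hσ₁ (ltE_of_le_of_ltE hle₁ hT)
        exact ⟨z, Relation.ReflTransGen.head h₁ hchain, hz⟩
  · push_neg at hstep
    exact (keyclaim hG0 hyp'
      (fun σ' h' y hy hsig => OIH σ' h' y hy hsig (ltE_of_le_of_ltE h'.1 hT))
      hσf hφ hT hstep).elim

end Aux6
/-- Signature S-pair criterion. If every regular S-pair of elements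
of `G` and every basis vector `eᵢ`, with signature `≺ s`, has all its regular
Sig-normal forms either syzygies or singularly Sig-top-reducible, then `G` is a
Sig-Gröbner basis up to `s`; if the hypothesis holds with no restriction on the
signature, then `G` is a Sig-Gröbner basis. -/
theorem statement0 {F : Type*} [Field F] {n m : ℕ} (hn : 0 < n) (hm : 0 < m)
    (tord : TermOrder n) (mo : ModOrder n m tord)
    (fs : Fin m → MvPolynomial (Fin n) F) (hfs : ∀ i, fs i ≠ 0)
    (G : Finset (Fin m → MvPolynomial (Fin n) F))
    (hG0 : ∀ g ∈ G, g ≠ 0) (hGphi : ∀ g ∈ G, phi fs g ≠ 0)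
    (s : MTerm n m)
    (hyp : ∀ p σp,
        ((∃ f ∈ G, ∃ g ∈ G, IsRegSpair tord mo fs f g p) ∨
          ∃ i : Fin m, p = Pi.single i (1 : MvPolynomial (Fin n) F)) →
        IsSig mo p σp → mlt mo σp s →
        ∀ q, RegNF tord mo fs G p q →
          phi fs q = 0 ∨ SingTopReducible tord mo fs G q) :
    SigGBUpTo tord mo fs G s ∧
    ((∀ p, ((∃ f ∈ G, ∃ g ∈ G, IsRegSpair tord mo fs f g p) ∨
          ∃ i : Fin m, p = Pi.single i (1 : MvPolynomial (Fin n) F)) →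
        ∀ q, RegNF tord mo fs G p q →
          phi fs q = 0 ∨ SingTopReducible tord mo fs G q) →
      ∀ f, f ≠ 0 → SigReducesToZero tord mo fs G f) := by
  constructor
  · intro f σ hf hσ hm'
    have hyp' : ∀ p σp, Cond tord mo fs G p → IsSig mo p σp →
        ltE mo σp (↑s : WithTop (MTerm n m)) →
        ∀ q, RegNF tord mo fs G p q → phi fs q = 0 ∨ SingTopReducible tord mo fs G q := by
      intro p σp hc hs hl q hq
      exact hyp p σp hc hs (hl s rfl) q hq
    refine mainlemma hG0 hyp' σ f hf hσ ?_
    intro τ hτ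
    have : s = τ := WithTop.coe_inj.mp hτ
    exact this ▸ hm'
  · intro hypAll f hf
    obtain ⟨σ, hσ⟩ := exists_isSig (mo := mo) hf
    have hyp' : ∀ p σp, Cond tord mo fs G p → IsSig mo p σp →
        ltE mo σp (⊤ : WithTop (MTerm n m)) →
        ∀ q, RegNF tord mo fs G p q → phi fs q = 0 ∨ SingTopReducible tord mo fs G q := by
      intro p σp hc _ _ q hq
      exact hypAll p hc q hq
    exact mainlemma hG0 hyp' σ f hf hσ (fun τ hτ => absurd hτ WithTop.top_ne_coe)
end

section
/- (Reducible terms after one reduction step with a tail-irreducible reductor.) Let G be a finite set of nonzero polynomials in P, let p be a nonzero polynomial, and let m be a nonzero polynomial with t := LT(m) ∈ T(p) such that every term of Tail(m) is irreducible with respect to G, i.e. T_G(m) ⊆ {t}. Set q := p − (C_t(p)/LC(m))·m. Then T_G(q) ⊆ T_G(p) \ {t}; in particular, reducing p by the tail-irreducible reductor m introduces no new G-reducible terms. -/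
open MvPolynomial

variable {F : Type*} [Field F] {n m : ℕ}

theorem coeff_sub_div_smul_self (p r : MvPolynomial (Fin n) F) {t : Term n}
    (ht : coeff t r ≠ 0) :
    coeff t (p - (coeff t p / coeff t r) • r) = 0 := by
  rw [coeff_sub, coeff_smul, smul_eq_mul, div_mul_cancel₀ _ ht, sub_self]

theorem TRed_sub_smul_subset (tord : TermOrder n) (G : Finset (MvPolynomial (Fin n) F))
    (p r : MvPolynomial (Fin n) F) (c : F) :
    TRed tord G (p - c • r) ⊆ TRed tord G p ∪ TRed tord G r := by
  classical
  intro s hs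
  rcases Finset.mem_union.mp (support_sub _ p (c • r) hs.1) with hp | hr
  · exact Or.inl ⟨hp, hs.2⟩
  · exact Or.inr ⟨support_smul hr, hs.2⟩

theorem statement8_general {F : Type*} [Field F] {n : ℕ}
    (tord : TermOrder n)
    (G : Finset (MvPolynomial (Fin n) F))
    (p r : MvPolynomial (Fin n) F)
    (t : Term n) (ht : IsLT tord r t)
    (htail : TRed tord G r ⊆ {t}) :
    TRed tord G (p - (MvPolynomial.coeff t p / MvPolynomial.coeff t r) • r) ⊆
      TRed tord G p \ {t} := by
  intro s hs
  have hst : s ≠ t := by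
    rintro rfl
    exact mem_support_iff.mp hs.1
      (coeff_sub_div_smul_self p r (mem_support_iff.mp ht.1))
  rcases TRed_sub_smul_subset tord G p r _ hs with hp | hr
  · exact ⟨hp, hst⟩
  · exact absurd (htail hr) hst

/-- Reducible terms after one reduction step with a tail-irreducible
reductor. If moreover every term of `Tail(m)` is irreducible w.r.t. `G`
(`T_G(m) ⊆ {t}`), then `T_G(q) ⊆ T_G(p) \ {t}`: no new `G`-reducible terms appear. -/
theorem statement8 {F : Type*} [Field F] {n : ℕ} (hn : 0 < n)
    (tord : TermOrder n)
    (G : Finset (MvPolynomial (Fin n) F)) (hG : ∀ g ∈ G, g ≠ 0)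
    (p r : MvPolynomial (Fin n) F) (hp : p ≠ 0) (hr : r ≠ 0)
    (t : Term n) (ht : IsLT tord r t) (htp : t ∈ p.support)
    (htail : TRed tord G r ⊆ {t}) :
    TRed tord G (p - (MvPolynomial.coeff t p / MvPolynomial.coeff t r) • r) ⊆
      TRed tord G p \ {t} :=
  statement8_general tord G p r t ht htail
end
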